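/- (Geodesic smoothness of the KL divergence on the Bures–Wasserstein manifold.) Fix κ ≥ 1 and let Σ₀, Σ₁ ∈ 𝒦_{1/√κ, √κ}. Let T := T_{Σ₀→Σ₁} and define the Bures–Wasserstein geodesic Σ_s := ((1−s) I_d + s T) Σ₀ ((1−s) I_d + s T) for s ∈ [0,1]. Let G(Σ) := (1/2)(tr Σ − ln det Σ − d). Then the function s ↦ G(Σ_s) is twice differentiable at s = 0 and its second derivative at s = 0 is at most 2√κ · W₂²(Σ₀, Σ₁). -/

import Mathlib

open Matrix
open scoped Classical

/-- Symmetric PSD square root of a positive semidefinite matrix (junk value `0` otherwise). -/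
noncomputable def msqrt {d : ℕ} (M : Matrix (Fin d) (Fin d) ℝ) : Matrix (Fin d) (Fin d) ℝ :=
  if h : M.PosSemidef then
    (h.1.eigenvectorUnitary : Matrix (Fin d) (Fin d) ℝ) *
      diagonal ((↑) ∘ Real.sqrt ∘ h.1.eigenvalues) *
      (star h.1.eigenvectorUnitary : Matrix (Fin d) (Fin d) ℝ) else 0

/-- Optimal transport map `T_{A→B} = A^{-1/2} (A^{1/2} B A^{1/2})^{1/2} A^{-1/2}`. -/
noncomputable def Tmap {d : ℕ} (A B : Matrix (Fin d) (Fin d) ℝ) : Matrix (Fin d) (Fin d) ℝ :=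
  (msqrt A)⁻¹ * msqrt (msqrt A * B * msqrt A) * (msqrt A)⁻¹

/-- Squared Bures–Wasserstein distance `tr(A + B - 2 (A^{1/2} B A^{1/2})^{1/2})`. -/
noncomputable def W2sq {d : ℕ} (A B : Matrix (Fin d) (Fin d) ℝ) : ℝ :=
  (A + B - (2 : ℝ) • msqrt (msqrt A * B * msqrt A)).trace

/-- Bures–Wasserstein distance. -/
noncomputable def W2 {d : ℕ} (A B : Matrix (Fin d) (Fin d) ℝ) : ℝ :=
  Real.sqrt (W2sq A B)

/-- Smallest eigenvalue of a (hermitian) matrix. -/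
noncomputable def lamMin {d : ℕ} (M : Matrix (Fin d) (Fin d) ℝ) : ℝ :=
  if h : M.IsHermitian then ⨅ i, h.eigenvalues i else 0

/-- Largest eigenvalue of a (hermitian) matrix. -/
noncomputable def lamMax {d : ℕ} (M : Matrix (Fin d) (Fin d) ℝ) : ℝ :=
  if h : M.IsHermitian then ⨆ i, h.eigenvalues i else 0

/-- `Kset a b` : symmetric positive definite matrices with all eigenvalues in `[a, b]`,
expressed via the Loewner order `a • I ⪯ S ⪯ b • I`. -/
def Kset {d : ℕ} (a b : ℝ) : Set (Matrix (Fin d) (Fin d) ℝ) :=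
  {S | S.PosDef ∧ (S - a • (1 : Matrix (Fin d) (Fin d) ℝ)).PosSemidef ∧
    (b • (1 : Matrix (Fin d) (Fin d) ℝ) - S).PosSemidef}

/-- Barycenter functional `F(S) = (1/(2N)) ∑ᵢ W₂²(S, Σᵢ)`. -/
noncomputable def Fbar {d N : ℕ} (Ss : Fin N → Matrix (Fin d) (Fin d) ℝ)
    (S : Matrix (Fin d) (Fin d) ℝ) : ℝ :=
  (1 / (2 * (N : ℝ))) * ∑ i, W2sq S (Ss i)

/-- Bures–Wasserstein gradient of the barycenter functional: `I - (1/N) ∑ᵢ T_{S→Σᵢ}`. -/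
noncomputable def gradF {d N : ℕ} (Ss : Fin N → Matrix (Fin d) (Fin d) ℝ)
    (S : Matrix (Fin d) (Fin d) ℝ) : Matrix (Fin d) (Fin d) ℝ :=
  1 - (N : ℝ)⁻¹ • ∑ i, Tmap S (Ss i)

/-- `‖A‖_S² = tr(A S A)`. -/
noncomputable def normAtSq {d : ℕ} (A S : Matrix (Fin d) (Fin d) ℝ) : ℝ :=
  (A * S * A).trace

/-- Entropic penalty `G(Σ) = (1/2)(tr Σ - ln det Σ - d)`
(the KL divergence of `N(0, Σ)` from `N(0, I)`). -/
noncomputable def Gent {d : ℕ} (S : Matrix (Fin d) (Fin d) ℝ) : ℝ :=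
  (1 / 2 : ℝ) * (S.trace - Real.log S.det - (d : ℝ))

/-- Entropically-regularized barycenter functional `F_γ = F + γ G`. -/
noncomputable def Freg {d N : ℕ} (γ : ℝ) (Ss : Fin N → Matrix (Fin d) (Fin d) ℝ)
    (S : Matrix (Fin d) (Fin d) ℝ) : ℝ :=
  Fbar Ss S + γ * Gent S

/-- Bures–Wasserstein gradient of `F_γ`: `∇F(Σ) + γ (I - Σ⁻¹)`. -/
noncomputable def gradFreg {d N : ℕ} (γ : ℝ) (Ss : Fin N → Matrix (Fin d) (Fin d) ℝ)
    (S : Matrix (Fin d) (Fin d) ℝ) : Matrix (Fin d) (Fin d) ℝ :=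
  gradF Ss S + γ • (1 - S⁻¹)

/-!
Write `A := T - 1`, so that the geodesic is `s ↦ (1 + s A) Σ₀ (1 + s A)`. With `μᵢ` the
eigenvalues of `A`, `det (1 + s A) = ∏ᵢ (1 + s μᵢ)`, hence near `s = 0`
`G(Σ_s) = G(Σ₀) + s tr(A Σ₀) + (s²/2) tr(A Σ₀ A) - ∑ᵢ log (1 + s μᵢ)`,
whose second derivative at `0` is `tr(A Σ₀ A) + ∑ᵢ μᵢ² = tr(A Σ₀ A) + tr(A²)`.
Since `T Σ₀ T = Σ₁`, `tr(A Σ₀ A) = W₂²(Σ₀, Σ₁)`; and `Σ₀ ⪰ κ^{-1/2}` gives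
`tr(A²) ≤ √κ tr(A Σ₀ A)`.
-/

open Filter Topology
open scoped MatrixOrder

namespace Matrix

variable {n : Type*} [Fintype n]

lemma IsHermitian.trace_mul_mul_self_nonneg {A S : Matrix n n ℝ} (hA : A.IsHermitian)
    (hS : S.PosSemidef) : 0 ≤ (A * S * A).trace := by
  have := (hS.conjTranspose_mul_mul_same A).trace_nonneg
  rwa [hA.eq] at this

variable [DecidableEq n]

lemma IsHermitian.det_cfc {A : Matrix n n ℝ} (hA : A.IsHermitian) (f : ℝ → ℝ) :
    (cfc f A).det = ∏ i, f (hA.eigenvalues i) := by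
  rw [hA.cfc_eq]
  simp [IsHermitian.cfc, -Unitary.conjStarAlgAut_apply]

lemma IsHermitian.trace_cfc {A : Matrix n n ℝ} (hA : A.IsHermitian) (f : ℝ → ℝ) :
    (cfc f A).trace = ∑ i, f (hA.eigenvalues i) := by
  rw [hA.cfc_eq, IsHermitian.cfc, Unitary.conjStarAlgAut_apply, trace_mul_cycle,
    Unitary.coe_star_mul_self, one_mul, trace_diagonal]
  simp

lemma IsHermitian.det_one_add_smul {A : Matrix n n ℝ} (hA : A.IsHermitian) (s : ℝ) :
    (1 + s • A).det = ∏ i, (1 + s * hA.eigenvalues i) := by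
  have hA' : IsSelfAdjoint A := hA
  have hcfc : cfc (fun x => 1 + s * x) A = 1 + s • A := by
    rw [cfc_const_add (1 : ℝ) (fun x => s * x) A, cfc_const_mul_id s A,
      Algebra.algebraMap_eq_smul_one, one_smul]
  rw [← hcfc, hA.det_cfc]

lemma IsHermitian.trace_mul_self {A : Matrix n n ℝ} (hA : A.IsHermitian) :
    (A * A).trace = ∑ i, hA.eigenvalues i ^ 2 := by
  have hA' : IsSelfAdjoint A := hA
  rw [← sq, ← cfc_pow_id (R := ℝ) A 2, hA.trace_cfc]

lemma IsHermitian.mul_trace_mul_self_le {A S : Matrix n n ℝ} {a : ℝ} (hA : A.IsHermitian)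
    (hS : (S - a • 1).PosSemidef) : a * (A * A).trace ≤ (A * S * A).trace := by
  have := hA.trace_mul_mul_self_nonneg hS
  rwa [Matrix.mul_sub, Matrix.sub_mul, trace_sub, Matrix.mul_smul, Matrix.smul_mul,
    Matrix.mul_one, trace_smul, smul_eq_mul, sub_nonneg] at this

lemma trace_one_add_smul_mul_mul (A S : Matrix n n ℝ) (s : ℝ) :
    ((1 + s • A) * S * (1 + s • A)).trace
      = S.trace + 2 * s * (A * S).trace + s ^ 2 * (A * S * A).trace := by
  simp only [Matrix.add_mul, Matrix.mul_add, Matrix.one_mul, Matrix.mul_one, Matrix.smul_mul,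
    Matrix.mul_smul, trace_add, trace_smul, smul_eq_mul, trace_mul_comm S A]
  ring

lemma IsHermitian.log_det_one_add_smul_mul_mul {A S : Matrix n n ℝ} (hA : A.IsHermitian)
    (hS : S.det ≠ 0) {s : ℝ} (hs : ∀ i, 1 + s * hA.eigenvalues i ≠ 0) :
    Real.log ((1 + s • A) * S * (1 + s • A)).det
      = Real.log S.det + 2 * ∑ i, Real.log (1 + s * hA.eigenvalues i) := by
  have hP : ∏ i, (1 + s * hA.eigenvalues i) ≠ 0 := Finset.prod_ne_zero_iff.2 fun i _ => hs i
  rw [det_mul, det_mul, hA.det_one_add_smul, Real.log_mul (mul_ne_zero hP hS) hP,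
    Real.log_mul hP hS, Real.log_prod fun i _ => hs i]
  ring

end Matrix

section OneAddMul

variable {ι : Type*} [Fintype ι] (μ : ι → ℝ)

lemma eventually_forall_one_add_mul_ne_zero {s : ℝ} (hs : ∀ i, 1 + s * μ i ≠ 0) :
    ∀ᶠ t in 𝓝 s, ∀ i, 1 + t * μ i ≠ 0 :=
  eventually_all.2 fun i =>
    (by fun_prop : Continuous fun t => 1 + t * μ i).continuousAt.eventually_ne (hs i)

lemma hasDerivAt_sum_log_one_add_mul {s : ℝ} (hs : ∀ i, 1 + s * μ i ≠ 0) :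
    HasDerivAt (fun t => ∑ i, Real.log (1 + t * μ i)) (∑ i, μ i / (1 + s * μ i)) s :=
  HasDerivAt.fun_sum fun i _ => ((hasDerivAt_mul_const (μ i)).const_add 1).log (hs i)

lemma hasDerivAt_sum_div_one_add_mul_zero :
    HasDerivAt (fun t => ∑ i, μ i / (1 + t * μ i)) (-∑ i, μ i ^ 2) 0 := by
  rw [← Finset.sum_neg_distrib]
  refine HasDerivAt.fun_sum fun i _ => ?_
  have := (hasDerivAt_const (0 : ℝ) (μ i)).fun_div ((hasDerivAt_mul_const (μ i)).const_add 1)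
    (by simp)
  simpa [sq] using this

end OneAddMul

section BuresWasserstein

variable {d : ℕ}

lemma msqrt_eq_sqrt {M : Matrix (Fin d) (Fin d) ℝ} (hM : M.PosSemidef) :
    msqrt M = CFC.sqrt M := by
  rw [msqrt, dif_pos hM, CFC.sqrt_eq_cfc, cfc_nnreal_eq_real _ M, hM.1.cfc_eq,
    Matrix.IsHermitian.cfc, Unitary.conjStarAlgAut_apply]
  congr 3
  funext i
  simp [max_eq_left (hM.eigenvalues_nonneg i)]

lemma msqrt_isHermitian (M : Matrix (Fin d) (Fin d) ℝ) : (msqrt M).IsHermitian := by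
  by_cases hM : M.PosSemidef
  · rw [msqrt_eq_sqrt hM]
    exact (Matrix.nonneg_iff_posSemidef.1 (CFC.sqrt_nonneg M)).isHermitian
  · simp [msqrt, hM]

lemma msqrt_mul_self {M : Matrix (Fin d) (Fin d) ℝ} (hM : M.PosSemidef) :
    msqrt M * msqrt M = M := by
  rw [msqrt_eq_sqrt hM]
  exact CFC.sqrt_mul_sqrt_self M hM.nonneg

lemma isUnit_det_msqrt {M : Matrix (Fin d) (Fin d) ℝ} (hM : M.PosDef) : IsUnit (msqrt M).det :=
  isUnit_of_mul_isUnit_left (y := (msqrt M).det) <| by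
    rw [← Matrix.det_mul, msqrt_mul_self hM.posSemidef]
    exact hM.isUnit.map Matrix.detMonoidHom

lemma Tmap_isHermitian (A B : Matrix (Fin d) (Fin d) ℝ) : (Tmap A B).IsHermitian := by
  have hQ := msqrt_isHermitian A
  have hR := msqrt_isHermitian (msqrt A * B * msqrt A)
  rw [Tmap, Matrix.IsHermitian, Matrix.conjTranspose_mul, Matrix.conjTranspose_mul,
    Matrix.conjTranspose_nonsing_inv, hQ.eq, hR.eq]
  simp only [Matrix.mul_assoc]

variable {A B : Matrix (Fin d) (Fin d) ℝ}

lemma Matrix.PosSemidef.msqrt_mul_mul_msqrt (hB : B.PosSemidef) (A : Matrix (Fin d) (Fin d) ℝ) :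
    (msqrt A * B * msqrt A).PosSemidef := by
  have := hB.conjTranspose_mul_mul_same (msqrt A)
  rwa [(msqrt_isHermitian A).eq] at this

lemma Tmap_mul_mul_Tmap (hA : A.PosDef) (hB : B.PosSemidef) : Tmap A B * A * Tmap A B = B := by
  have hRR := msqrt_mul_self (hB.msqrt_mul_mul_msqrt A)
  have hQQ := msqrt_mul_self hA.posSemidef
  have hQ := isUnit_det_msqrt hA
  rw [Tmap]
  set Q := msqrt A
  set R := msqrt (Q * B * Q)
  calc Q⁻¹ * R * Q⁻¹ * A * (Q⁻¹ * R * Q⁻¹) = Q⁻¹ * (R * R) * Q⁻¹ := by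
        rw [← hQQ]
        simp only [Matrix.mul_assoc, Matrix.nonsing_inv_mul_cancel_left (h := hQ),
          Matrix.mul_nonsing_inv_cancel_left (h := hQ)]
    _ = B := by
        rw [hRR]
        simp only [Matrix.mul_assoc, Matrix.nonsing_inv_mul_cancel_left (h := hQ),
          Matrix.mul_nonsing_inv _ hQ, Matrix.mul_one]

lemma trace_Tmap_mul (hA : A.PosDef) :
    (Tmap A B * A).trace = (msqrt (msqrt A * B * msqrt A)).trace := by
  have hQQ := msqrt_mul_self hA.posSemidef
  have hQ := isUnit_det_msqrt hA
  rw [Tmap]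
  set Q := msqrt A
  rw [← hQQ, ← Matrix.mul_assoc, Matrix.nonsing_inv_mul_cancel_right (h := hQ),
    Matrix.mul_assoc, Matrix.trace_mul_comm, Matrix.mul_assoc, Matrix.mul_nonsing_inv _ hQ, Matrix.mul_one]

lemma W2sq_eq_trace (hA : A.PosDef) (hB : B.PosSemidef) :
    W2sq A B = ((Tmap A B - 1) * A * (Tmap A B - 1)).trace := by
  have hexp : (Tmap A B - 1) * A * (Tmap A B - 1)
      = Tmap A B * A * Tmap A B - Tmap A B * A - A * Tmap A B + A := by
    noncomm_ring
  rw [hexp, Matrix.trace_add, Matrix.trace_sub, Matrix.trace_sub, Tmap_mul_mul_Tmap hA hB,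
    Matrix.trace_mul_comm A, trace_Tmap_mul hA, W2sq, Matrix.trace_sub, Matrix.trace_add,
    Matrix.trace_smul, smul_eq_mul]
  ring

end BuresWasserstein

section Gent

variable {d : ℕ} {A S : Matrix (Fin d) (Fin d) ℝ}

lemma hasDerivAt_Gent_geodesic (hS : S.PosDef) (hA : A.IsHermitian) {s : ℝ}
    (hs : ∀ i, 1 + s * hA.eigenvalues i ≠ 0) :
    HasDerivAt (fun t : ℝ => Gent ((1 + t • A) * S * (1 + t • A)))
      ((A * S).trace + s * (A * S * A).trace
        - ∑ i, hA.eigenvalues i / (1 + s * hA.eigenvalues i)) s := by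
  set μ := hA.eigenvalues
  have hF : HasDerivAt (fun t => Gent S + (A * S).trace * t + (A * S * A).trace / 2 * t ^ 2
      - ∑ i, Real.log (1 + t * μ i))
      ((A * S).trace * 1 + (A * S * A).trace / 2 * (2 * s ^ 1) - ∑ i, μ i / (1 + s * μ i)) s :=
    ((((hasDerivAt_id s).const_mul _).const_add _).add ((hasDerivAt_pow 2 s).const_mul _)).sub
      (hasDerivAt_sum_log_one_add_mul μ hs)
  refine HasDerivAt.congr_of_eventuallyEq (hF.congr_deriv (by ring)) ?_
  filter_upwards [eventually_forall_one_add_mul_ne_zero μ hs] with t ht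
  rw [Gent, Gent, Matrix.trace_one_add_smul_mul_mul,
    hA.log_det_one_add_smul_mul_mul hS.det_pos.ne' ht]
  ring

lemma hasDerivAt_deriv_Gent_geodesic_zero (hS : S.PosDef) (hA : A.IsHermitian) :
    HasDerivAt (deriv fun t : ℝ => Gent ((1 + t • A) * S * (1 + t • A)))
      ((A * S * A).trace + (A * A).trace) 0 := by
  set μ := hA.eigenvalues
  have hderiv : ∀ᶠ t in 𝓝 (0 : ℝ),
      deriv (fun t : ℝ => Gent ((1 + t • A) * S * (1 + t • A))) t
        = (A * S).trace + t * (A * S * A).trace - ∑ i, μ i / (1 + t * μ i) :=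
    (eventually_forall_one_add_mul_ne_zero μ (by simp)).mono fun t ht =>
      (hasDerivAt_Gent_geodesic hS hA ht).deriv
  have hF : HasDerivAt (fun t : ℝ => (A * S).trace + t * (A * S * A).trace
      - ∑ i, μ i / (1 + t * μ i)) (1 * (A * S * A).trace - -∑ i, μ i ^ 2) 0 :=
    (((hasDerivAt_id 0).mul_const _).const_add _).sub (hasDerivAt_sum_div_one_add_mul_zero μ)
  exact (hF.congr_deriv (by rw [hA.trace_mul_self]; ring)).congr_of_eventuallyEq hderiv

end Gent

/-- Geodesic `2√κ`-smoothness of the KL divergence `G` along the Bures–Wasserstein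
geodesic from `S0` to `S1`. -/
theorem kl_geodesic_smoothness {d : ℕ} (κ : ℝ) (hκ : 1 ≤ κ)
    (S0 S1 : Matrix (Fin d) (Fin d) ℝ)
    (h0 : S0 ∈ Kset (Real.sqrt κ)⁻¹ (Real.sqrt κ))
    (h1 : S1 ∈ Kset (Real.sqrt κ)⁻¹ (Real.sqrt κ))
    (g : ℝ → ℝ)
    (hg : g = fun s : ℝ =>
      Gent (((1 - s) • (1 : Matrix (Fin d) (Fin d) ℝ) + s • Tmap S0 S1) * S0 *
        ((1 - s) • (1 : Matrix (Fin d) (Fin d) ℝ) + s • Tmap S0 S1))) :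
    DifferentiableAt ℝ g 0 ∧ DifferentiableAt ℝ (deriv g) 0 ∧
    deriv (deriv g) 0 ≤ 2 * Real.sqrt κ * W2sq S0 S1 := by
  obtain ⟨hS0, hS0_lower, -⟩ := h0
  set A := Tmap S0 S1 - 1
  have hA : A.IsHermitian := (Tmap_isHermitian S0 S1).sub Matrix.isHermitian_one
  have hgeod (s : ℝ) :
      (1 - s) • (1 : Matrix (Fin d) (Fin d) ℝ) + s • Tmap S0 S1 = 1 + s • A := by
    rw [smul_sub, sub_smul, one_smul]
    abel
  simp only [hgeod] at hg
  subst hg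
  have h2 := hasDerivAt_deriv_Gent_geodesic_zero hS0 hA
  refine ⟨(hasDerivAt_Gent_geodesic hS0 hA (by simp)).differentiableAt, h2.differentiableAt, ?_⟩
  have hAA : (A * A).trace ≤ Real.sqrt κ * (A * S0 * A).trace := by
    rw [← inv_mul_le_iff₀ (by positivity)]
    exact hA.mul_trace_mul_self_le hS0_lower
  have hS0A : (A * S0 * A).trace ≤ Real.sqrt κ * (A * S0 * A).trace :=
    le_mul_of_one_le_left (hA.trace_mul_mul_self_nonneg hS0.posSemidef) (Real.one_le_sqrt.2 hκ)
  rw [h2.deriv, W2sq_eq_trace hS0 h1.1.posSemidef]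
  linarith
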